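/- Let k be a real number with k² = 1/3. The zero set of the planar vector field F(θ, α) = (kα(kθ − 1) + θ((θ + k)² − (1 + k²)), α((θ + k)² + (1 − k²)(1 − α))) consists of exactly the six points (0, 0), (−k, 1), (1, 2/(1 − k)), (−1, 2/(1 + k)), (−1/k, 0), and (k, 0). -/
import Mathlib


/-- For `k² = 1/3`, the zero set of the planar vector field
`F(θ, α) = (kα(kθ − 1) + θ((θ + k)² − (1 + k²)), α((θ + k)² + (1 − k²)(1 − α)))`
consists of exactly the six points `(0, 0)`, `(−k, 1)`, `(1, 2/(1 − k))`,
`(−1, 2/(1 + k))`, `(−1/k, 0)`, `(k, 0)`. -/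
theorem critical_points_of_reduced_system (k : ℝ) (hk : k ^ 2 = 1 / 3) :
    {p : ℝ × ℝ |
        k * p.2 * (k * p.1 - 1) + p.1 * ((p.1 + k) ^ 2 - (1 + k ^ 2)) = 0 ∧
        p.2 * ((p.1 + k) ^ 2 + (1 - k ^ 2) * (1 - p.2)) = 0} =
      {((0 : ℝ), (0 : ℝ)), (-k, 1), (1, 2 / (1 - k)), (-1, 2 / (1 + k)),
        (-1 / k, 0), (k, 0)} := by
  have hk0 : k ≠ 0 := fun h => by rw [h] at hk; norm_num at hk
  have h1m : (1 : ℝ) - k ≠ 0 := fun h => by nlinarith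
  have h1p : (1 : ℝ) + k ≠ 0 := fun h => by nlinarith
  have hαp : 2 / (1 - k) = 3 * (1 + k) := by
    rw [div_eq_iff h1m]; linear_combination 3 * hk
  have hαm : 2 / (1 + k) = 3 * (1 - k) := by
    rw [div_eq_iff h1p]; linear_combination 3 * hk
  have hik : -1 / k = -3 * k := by
    rw [div_eq_iff hk0]; linear_combination 3 * hk
  ext ⟨θ, α⟩
  simp only [Set.mem_setOf_eq, Set.mem_insert_iff, Set.mem_singleton_iff, Prod.mk.injEq]
  constructor
  · rintro ⟨h1, h2⟩
    rcases mul_eq_zero.mp h2 with hα | hf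
    · subst hα
      have hcub : θ * ((θ - k) * (θ + 3 * k)) = 0 := by
        linear_combination h1 - 3 * θ * hk
      rcases mul_eq_zero.mp hcub with h | h
      · exact Or.inl ⟨h, rfl⟩
      · rcases mul_eq_zero.mp h with h | h
        · exact Or.inr (Or.inr (Or.inr (Or.inr (Or.inr ⟨by linarith, rfl⟩))))
        · refine Or.inr (Or.inr (Or.inr (Or.inr (Or.inl ⟨?_, rfl⟩))))
          rw [hik]; linarith
    · have hα : α = 1 + 3 / 2 * (θ + k) ^ 2 := by
        linear_combination (-3 / 2 : ℝ) * hf + 3 / 2 * (α - 1) * hk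
      subst hα
      have hcub : (θ + k) * ((θ - 1) * (θ + 1)) = 0 := by
        linear_combination (2 / 3 : ℝ) * h1 +
          (-k ^ 2 * θ + k * (1 - 2 * θ ^ 2) + θ - θ ^ 3) * hk
      rcases mul_eq_zero.mp hcub with h | h
      · refine Or.inr (Or.inl ⟨by linarith, ?_⟩)
        have hθ : θ + k = 0 := h
        rw [hθ]; ring
      · rcases mul_eq_zero.mp h with h | h
        · refine Or.inr (Or.inr (Or.inl ⟨by linarith, ?_⟩))
          have hθ : θ = 1 := by linarith
          subst hθ
          rw [eq_div_iff h1m]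
          linear_combination (-3 / 2 - 3 / 2 * k) * hk
        · refine Or.inr (Or.inr (Or.inr (Or.inl ⟨by linarith, ?_⟩)))
          have hθ : θ = -1 := by linarith
          subst hθ
          rw [eq_div_iff h1p]
          linear_combination (-3 / 2 + 3 / 2 * k) * hk
  · rintro (⟨h1, h2⟩ | ⟨h1, h2⟩ | ⟨h1, h2⟩ | ⟨h1, h2⟩ | ⟨h1, h2⟩ | ⟨h1, h2⟩) <;>
      rw [h1, h2]
    · constructor <;> ring
    · constructor <;> ring
    · rw [hαp]
      exact ⟨by linear_combination 3 * k * hk, by linear_combination 9 * (1 + k) ^ 2 * hk⟩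
    · rw [hαm]
      exact ⟨by linear_combination 3 * k * hk, by linear_combination 9 * (1 - k) ^ 2 * hk⟩
    · rw [hik]
      exact ⟨by linear_combination -9 * k * hk, by ring⟩
    · exact ⟨by linear_combination 3 * k * hk, by ring⟩
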